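/- Assume: (A2) the program (P_b) has a unique optimal solution x*(b); (B1) the random vectors G_n = r_n(b_n − b) converge in distribution to a random vector G whose law is absolutely continuous with respect to Lebesgue measure on ℝ^m, where r_n → ∞; (B2) ℙ(OPT(b_n) ≠ ∅) → 1; and the optimal solution x*(b) is nondegenerate, i.e. it has exactly m nonzero coordinates. Then there is a unique basis I_1 that is both primal feasible and dual feasible, and for any measurable choice x*(b_n) of an element of OPT(b_n) (on the event that OPT(b_n) is non-empty), the random vectors r_n(x*(b_n) − x*(b)) converge in distribution to x(I_1, G), an invertible linear function of G. -/

import Mathlib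

open Matrix

noncomputable section

variable {m d : ℕ}

/-- The primal feasible set `P(b) = {x : A x = b, x ≥ 0}`. -/
def feasSet (A : Matrix (Fin m) (Fin d) ℝ) (b : Fin m → ℝ) : Set (Fin d → ℝ) :=
  {x | A *ᵥ x = b ∧ ∀ i, 0 ≤ x i}

/-- The optimality set `OPT(b)` of the primal program `(P_b)`. -/
def optSet (A : Matrix (Fin m) (Fin d) ℝ) (b : Fin m → ℝ) (c : Fin d → ℝ) :
    Set (Fin d → ℝ) :=
  {x | x ∈ feasSet A b ∧ ∀ y ∈ feasSet A b, c ⬝ᵥ x ≤ c ⬝ᵥ y}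

/-- The dual feasible set `{λ : Aᵀ λ ≤ c}`. -/
def dualFeasSet (A : Matrix (Fin m) (Fin d) ℝ) (c : Fin d → ℝ) : Set (Fin m → ℝ) :=
  {l | ∀ j, (Aᵀ *ᵥ l) j ≤ c j}

/-- The set of optimal solutions of the dual program `(D_b)`. -/
def dualOptSet (A : Matrix (Fin m) (Fin d) ℝ) (b : Fin m → ℝ) (c : Fin d → ℝ) :
    Set (Fin m → ℝ) :=
  {l | l ∈ dualFeasSet A c ∧ ∀ mu ∈ dualFeasSet A c, b ⬝ᵥ mu ≤ b ⬝ᵥ l}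

/-- The submatrix `A_I` of the columns indexed by `I`, where the subset
`I ⊆ {1,…,d}` of cardinality `m` is encoded by the strictly monotone
enumeration `e : Fin m → Fin d` of its elements. -/
def subMat (A : Matrix (Fin m) (Fin d) ℝ) (e : Fin m → Fin d) :
    Matrix (Fin m) (Fin m) ℝ :=
  A.submatrix id e

/-- `e` encodes a basis: a subset of size `m` of the columns (strictly monotone
enumeration) whose corresponding submatrix `A_I` is invertible. -/
def IsBasis (A : Matrix (Fin m) (Fin d) ℝ) (e : Fin m → Fin d) : Prop :=
  StrictMono e ∧ IsUnit (subMat A e).det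

/-- The primal basic solution `x(I, v)`: equal to `(A_I)⁻¹ v` on the coordinates
in `I` and `0` elsewhere. -/
def basicSol (A : Matrix (Fin m) (Fin d) ℝ) (e : Fin m → Fin d) (v : Fin m → ℝ) :
    Fin d → ℝ :=
  fun i => ∑ j, if e j = i then ((subMat A e)⁻¹ *ᵥ v) j else 0

/-- The dual basic solution `λ(I) = (A_I)⁻ᵀ c_I`. -/
def dualSol (A : Matrix (Fin m) (Fin d) ℝ) (c : Fin d → ℝ) (e : Fin m → Fin d) :
    Fin m → ℝ :=
  ((subMat A e)ᵀ)⁻¹ *ᵥ fun j => c (e j)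

/-- `I` is a dual feasible basis: `Aᵀ λ(I) ≤ c`. -/
def DualFeasibleBasis (A : Matrix (Fin m) (Fin d) ℝ) (c : Fin d → ℝ)
    (e : Fin m → Fin d) : Prop :=
  IsBasis A e ∧ ∀ j, (Aᵀ *ᵥ dualSol A c e) j ≤ c j

/-- `I` is a primal feasible basis for `(P_b)`: `x(I,b) ≥ 0`. -/
def PrimalFeasibleBasis (A : Matrix (Fin m) (Fin d) ℝ) (b : Fin m → ℝ)
    (e : Fin m → Fin d) : Prop :=
  IsBasis A e ∧ ∀ i, 0 ≤ basicSol A e b i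

open MeasureTheory Filter Topology

/-- Convergence in distribution (weak convergence of pushforward laws),
characterized via bounded continuous test functions. -/
def TendstoInDistribution {Ω E : Type*} [MeasurableSpace Ω] (P : Measure Ω)
    [TopologicalSpace E] (X : ℕ → Ω → E) (Y : Ω → E) : Prop :=
  ∀ f : BoundedContinuousFunction E ℝ,
    Tendsto (fun n => ∫ ω, f (X n ω) ∂P) atTop (𝓝 (∫ ω, f (Y ω) ∂P))

/-!
Let `e` enumerate the support of `x*`. Uniqueness of `x*` forces the columns of `A_e` to be
independent (a kernel vector supported on the support would give a second optimum) and every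
reduced cost `c_i - (Aᵀ λ(e))_i` with `i ∉ e` to be positive (otherwise moving along the edge
entering column `i` would give a second optimum). Hence `e` is primal and dual feasible; any other
such basis has `x*` as basic solution, hence the same support. By strict complementary slackness,
`OPT(b') = {x(e, b')}` as soon as `x(e, b') ≥ 0`, which holds on a neighbourhood of `b`. The
scaled errors `G_n` are tight, so `b_n → b` in probability and, with probability tending to one,
`r_n (x*(b_n) - x*(b)) = x(e, G_n)`; the continuous mapping theorem gives the limit `x(e, G)`.
-/

theorem exists_strictMono_range_eq_of_ncard_eq {α : Type*} [LinearOrder α] [Finite α]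
    {s : Set α} (hs : s.ncard = m) : ∃ e : Fin m → α, StrictMono e ∧ Set.range e = s := by
  classical
  have hcard : s.toFinite.toFinset.card = m := by
    rw [← Set.ncard_eq_toFinset_card _, hs]
  exact ⟨_, (s.toFinite.toFinset.orderEmbOfFin hcard).strictMono, by simp⟩

section BasicSolution

variable {A : Matrix (Fin m) (Fin d) ℝ} {e : Fin m → Fin d}

theorem basicSol_apply_self (he : Function.Injective e) (v : Fin m → ℝ) (j : Fin m) :
    basicSol A e v (e j) = ((subMat A e)⁻¹ *ᵥ v) j := by
  simp [basicSol, he.eq_iff]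

theorem basicSol_apply_of_notMem {i : Fin d} (hi : i ∉ Set.range e) (v : Fin m → ℝ) :
    basicSol A e v i = 0 :=
  Finset.sum_eq_zero fun j _ => if_neg fun h => hi ⟨j, h⟩

theorem mulVec_eq_subMat_mulVec (he : Function.Injective e) {y : Fin d → ℝ}
    (hy : ∀ i ∉ Set.range e, y i = 0) : A *ᵥ y = subMat A e *ᵥ fun j => y (e j) := by
  ext k
  exact (Fintype.sum_of_injective e he _ _ (fun i hi => by simp [hy i hi]) fun j => rfl).symm

theorem mulVec_basicSol (hI : IsBasis A e) (v : Fin m → ℝ) : A *ᵥ basicSol A e v = v := by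
  rw [mulVec_eq_subMat_mulVec hI.1.injective fun i hi => basicSol_apply_of_notMem hi v]
  simp only [basicSol_apply_self hI.1.injective]
  rw [mulVec_mulVec, mul_nonsing_inv _ hI.2, one_mulVec]

theorem basicSol_injective (hI : IsBasis A e) : Function.Injective (basicSol A e) :=
  Function.LeftInverse.injective (mulVec_basicSol hI)

theorem eq_basicSol_of_support (hI : IsBasis A e) {y : Fin d → ℝ}
    (hy : ∀ i ∉ Set.range e, y i = 0) : y = basicSol A e (A *ᵥ y) := by
  ext i
  by_cases hi : i ∈ Set.range e
  · obtain ⟨j, rfl⟩ := hi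
    rw [basicSol_apply_self hI.1.injective, mulVec_eq_subMat_mulVec hI.1.injective hy,
      mulVec_mulVec, nonsing_inv_mul _ hI.2, one_mulVec]
  · rw [hy i hi, basicSol_apply_of_notMem hi]

variable (A e) in
def basicSolLinearMap : (Fin m → ℝ) →ₗ[ℝ] Fin d → ℝ where
  toFun := basicSol A e
  map_add' u v := by
    ext i
    simp [basicSol, mulVec_add, ← Finset.sum_add_distrib, ite_add_zero]
  map_smul' r v := by
    ext i
    simp [basicSol, mulVec_smul, Finset.mul_sum]

@[simp]
theorem basicSolLinearMap_apply (v : Fin m → ℝ) : basicSolLinearMap A e v = basicSol A e v :=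
  rfl

end BasicSolution

section Duality

variable {A : Matrix (Fin m) (Fin d) ℝ} {b : Fin m → ℝ} {c : Fin d → ℝ} {e : Fin m → Fin d}

theorem dotProduct_eq_dotProduct_mulVec_add (A : Matrix (Fin m) (Fin d) ℝ) (c : Fin d → ℝ)
    (l : Fin m → ℝ) (y : Fin d → ℝ) : c ⬝ᵥ y = l ⬝ᵥ (A *ᵥ y) + (c - Aᵀ *ᵥ l) ⬝ᵥ y := by
  rw [sub_dotProduct, dotProduct_mulVec, mulVec_transpose, dotProduct_comm (l ᵥ* A)]
  ring

theorem transpose_mulVec_dualSol_apply_self (hI : IsBasis A e) (j : Fin m) :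
    (Aᵀ *ᵥ dualSol A c e) (e j) = c (e j) := by
  have h : (Aᵀ *ᵥ dualSol A c e) (e j) = ((subMat A e)ᵀ *ᵥ dualSol A c e) j := by
    simp [mulVec, dotProduct, subMat]
  rw [h, dualSol, mulVec_mulVec, mul_nonsing_inv _ (by rw [det_transpose]; exact hI.2),
    one_mulVec]

theorem sub_transpose_mulVec_dualSol_dotProduct_basicSol (hI : IsBasis A e) (v : Fin m → ℝ) :
    (c - Aᵀ *ᵥ dualSol A c e) ⬝ᵥ basicSol A e v = 0 := by
  refine Finset.sum_eq_zero fun i _ => ?_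
  by_cases hi : i ∈ Set.range e
  · obtain ⟨j, rfl⟩ := hi
    simp [transpose_mulVec_dualSol_apply_self hI]
  · simp [basicSol_apply_of_notMem hi]

theorem dotProduct_basicSol (hI : IsBasis A e) (v : Fin m → ℝ) :
    c ⬝ᵥ basicSol A e v = dualSol A c e ⬝ᵥ v := by
  rw [dotProduct_eq_dotProduct_mulVec_add A c (dualSol A c e), mulVec_basicSol hI,
    sub_transpose_mulVec_dualSol_dotProduct_basicSol hI, add_zero]

theorem basicSol_mem_feasSet (hp : PrimalFeasibleBasis A b e) : basicSol A e b ∈ feasSet A b :=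
  ⟨mulVec_basicSol hp.1 b, hp.2⟩

theorem basicSol_mem_optSet (hp : PrimalFeasibleBasis A b e) (hd : DualFeasibleBasis A c e) :
    basicSol A e b ∈ optSet A b c := by
  refine ⟨basicSol_mem_feasSet hp, fun y hy => ?_⟩
  have hslack : 0 ≤ (c - Aᵀ *ᵥ dualSol A c e) ⬝ᵥ y :=
    Finset.sum_nonneg fun i _ => mul_nonneg (sub_nonneg.2 (hd.2 i)) (hy.2 i)
  rw [dotProduct_basicSol hp.1, dotProduct_eq_dotProduct_mulVec_add A c (dualSol A c e) y, hy.1]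
  linarith

theorem eq_basicSol_of_mem_optSet (hp : PrimalFeasibleBasis A b e)
    (hstrict : ∀ i ∉ Set.range e, (Aᵀ *ᵥ dualSol A c e) i < c i) {y : Fin d → ℝ}
    (hy : y ∈ optSet A b c) : y = basicSol A e b := by
  set r := c - Aᵀ *ᵥ dualSol A c e
  have hr : ∀ i, 0 ≤ r i := fun i => by
    by_cases hi : i ∈ Set.range e
    · obtain ⟨j, rfl⟩ := hi
      simp [r, transpose_mulVec_dualSol_apply_self hp.1]
    · exact sub_nonneg.2 (hstrict i hi).le
  have hterms : ∀ i ∈ Finset.univ, 0 ≤ r i * y i := fun i _ => mul_nonneg (hr i) (hy.1.2 i)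
  have hslack : r ⬝ᵥ y = 0 := by
    have hle := hy.2 _ (basicSol_mem_feasSet hp)
    rw [dotProduct_basicSol hp.1, dotProduct_eq_dotProduct_mulVec_add A c (dualSol A c e) y,
      hy.1.1] at hle
    exact le_antisymm (by linarith) (Finset.sum_nonneg hterms)
  have hsupp : ∀ i ∉ Set.range e, y i = 0 := fun i hi =>
    ((mul_eq_zero.1 ((Finset.sum_eq_zero_iff_of_nonneg hterms).1 hslack i
      (Finset.mem_univ i))).resolve_left (sub_pos.2 (hstrict i hi)).ne')
  rw [eq_basicSol_of_support hp.1 hsupp, hy.1.1]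

end Duality

theorem exists_pos_forall_add_mul_nonneg {ι : Type*} [Finite ι] {x w : ι → ℝ}
    (hx : ∀ i, 0 ≤ x i) (hw : ∀ i, x i = 0 → 0 ≤ w i) :
    ∃ t > 0, ∀ i, 0 ≤ x i + t * w i := by
  have hev : ∀ i, ∀ᶠ t in 𝓝[>] (0 : ℝ), 0 ≤ x i + t * w i := fun i => by
    rcases (hx i).eq_or_lt with hxi | hxi
    · filter_upwards [self_mem_nhdsWithin] with t ht
      rw [← hxi, zero_add]
      exact mul_nonneg (le_of_lt ht) (hw i hxi.symm)
    · have hcont : Continuous fun t : ℝ => x i + t * w i := by fun_prop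
      have hlim := hcont.tendsto' 0 (x i) (by simp)
      exact nhdsWithin_le_nhds ((hlim.eventually (lt_mem_nhds hxi)).mono fun _ => le_of_lt)
  exact ((Filter.eventually_all.2 hev).and self_mem_nhdsWithin).exists.imp
    fun t ht => ⟨ht.2, ht.1⟩

section UniqueOptimum

variable {A : Matrix (Fin m) (Fin d) ℝ} {b : Fin m → ℝ} {c : Fin d → ℝ} {x : Fin d → ℝ}
  {e : Fin m → Fin d}

theorem dotProduct_pos_of_optSet_eq_singleton (hx : optSet A b c = {x}) {w : Fin d → ℝ}
    (hw0 : A *ᵥ w = 0) (hw : ∀ i, x i = 0 → 0 ≤ w i) (hne : w ≠ 0) : 0 < c ⬝ᵥ w := by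
  have hxopt : x ∈ optSet A b c := hx ▸ rfl
  obtain ⟨t, ht, hnn⟩ := exists_pos_forall_add_mul_nonneg hxopt.1.2 hw
  have hz : x + t • w ∈ feasSet A b :=
    ⟨by rw [mulVec_add, mulVec_smul, hw0, smul_zero, add_zero, hxopt.1.1], hnn⟩
  have hcz : c ⬝ᵥ (x + t • w) = c ⬝ᵥ x + t * (c ⬝ᵥ w) := by
    rw [dotProduct_add, dotProduct_smul, smul_eq_mul]
  by_contra! hcw
  have hzopt : x + t • w ∈ optSet A b c :=
    ⟨hz, fun y hy => by nlinarith [hxopt.2 y hy]⟩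
  rw [hx, Set.mem_singleton_iff, add_eq_left, smul_eq_zero] at hzopt
  exact hne (hzopt.resolve_left ht.ne')

theorem isBasis_of_range_eq_support (hx : optSet A b c = {x}) (he : StrictMono e)
    (hrange : Set.range e = {i | x i ≠ 0}) : IsBasis A e := by
  refine ⟨he, isUnit_iff_ne_zero.2 fun hdet => ?_⟩
  obtain ⟨u, hu, hAu⟩ := exists_mulVec_eq_zero_iff.2 hdet
  set w : Fin d → ℝ := Function.extend e u 0
  have hwe : ∀ j, w (e j) = u j := he.injective.extend_apply u (0 : Fin d → ℝ)
  have hsupp : ∀ i ∉ Set.range e, w i = 0 := fun i hi =>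
    Function.extend_apply' u (0 : Fin d → ℝ) i fun ⟨j, hj⟩ => hi ⟨j, hj⟩
  have hw0 : A *ᵥ w = 0 := by
    rw [mulVec_eq_subMat_mulVec he.injective hsupp]
    simpa only [hwe] using hAu
  have hwx : ∀ i, x i = 0 → w i = 0 := fun i hxi => hsupp i (by simp [hrange, hxi])
  have hne : w ≠ 0 := fun h => hu (funext fun j => by rw [← hwe, h]; rfl)
  have hpos := dotProduct_pos_of_optSet_eq_singleton hx hw0 (fun i hi => (hwx i hi).ge) hne
  have hneg := dotProduct_pos_of_optSet_eq_singleton hx (by rw [mulVec_neg, hw0, neg_zero])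
    (fun i hi => by simp [hwx i hi]) (neg_ne_zero.2 hne)
  rw [dotProduct_neg] at hneg
  linarith

theorem basicSol_eq_of_range_eq_support (hx : optSet A b c = {x}) (he : StrictMono e)
    (hrange : Set.range e = {i | x i ≠ 0}) : basicSol A e b = x := by
  have hxopt : x ∈ optSet A b c := hx ▸ rfl
  rw [eq_basicSol_of_support (isBasis_of_range_eq_support hx he hrange)
    (y := x) (fun i hi => by simpa [hrange] using hi), hxopt.1.1]

theorem transpose_mulVec_dualSol_lt_of_range_eq_support (hx : optSet A b c = {x})
    (he : StrictMono e) (hrange : Set.range e = {i | x i ≠ 0}) {i : Fin d}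
    (hi : i ∉ Set.range e) : (Aᵀ *ᵥ dualSol A c e) i < c i := by
  have hI := isBasis_of_range_eq_support hx he hrange
  -- the edge direction of the simplex step bringing column `i` into the basis `e`
  set w : Fin d → ℝ := Pi.single i 1 - basicSol A e (A *ᵥ Pi.single i 1)
  have hw0 : A *ᵥ w = 0 := by rw [mulVec_sub, mulVec_basicSol hI, sub_self]
  have hwx : ∀ k, x k = 0 → 0 ≤ w k := fun k hxk => by
    have hk : k ∉ Set.range e := by simp [hrange, hxk]
    simp only [w, Pi.sub_apply, basicSol_apply_of_notMem hk, sub_zero]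
    exact (Pi.single_nonneg.2 zero_le_one : (0 : Fin d → ℝ) ≤ Pi.single i 1) k
  have hwi : w i = 1 := by simp [w, basicSol_apply_of_notMem hi]
  have hne : w ≠ 0 := fun h => by simp [h] at hwi
  have hpos := dotProduct_pos_of_optSet_eq_singleton hx hw0 hwx hne
  rw [dotProduct_eq_dotProduct_mulVec_add A c (dualSol A c e), hw0, dotProduct_zero, zero_add,
    dotProduct_sub, sub_transpose_mulVec_dualSol_dotProduct_basicSol hI, dotProduct_single,
    sub_zero, mul_one] at hpos
  exact sub_pos.1 hpos

theorem primalFeasibleBasis_of_range_eq_support (hx : optSet A b c = {x}) (he : StrictMono e)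
    (hrange : Set.range e = {i | x i ≠ 0}) : PrimalFeasibleBasis A b e := by
  refine ⟨isBasis_of_range_eq_support hx he hrange, ?_⟩
  rw [basicSol_eq_of_range_eq_support hx he hrange]
  exact (hx ▸ rfl : x ∈ optSet A b c).1.2

theorem dualFeasibleBasis_of_range_eq_support (hx : optSet A b c = {x}) (he : StrictMono e)
    (hrange : Set.range e = {i | x i ≠ 0}) : DualFeasibleBasis A c e := by
  refine ⟨isBasis_of_range_eq_support hx he hrange, fun i => ?_⟩
  by_cases hi : i ∈ Set.range e
  · obtain ⟨j, rfl⟩ := hi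
    exact (transpose_mulVec_dualSol_apply_self (isBasis_of_range_eq_support hx he hrange) j).le
  · exact (transpose_mulVec_dualSol_lt_of_range_eq_support hx he hrange hi).le

theorem eq_of_primalFeasibleBasis_of_dualFeasibleBasis (hx : optSet A b c = {x})
    (he : StrictMono e) (hrange : Set.range e = {i | x i ≠ 0}) {e' : Fin m → Fin d}
    (hp : PrimalFeasibleBasis A b e') (hd : DualFeasibleBasis A c e') : e' = e := by
  have hx' : basicSol A e' b = x := by simpa [hx] using basicSol_mem_optSet hp hd
  have hsub : {i | x i ≠ 0} ⊆ Set.range e' := fun i hi => by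
    by_contra hi'
    exact hi (by rw [← hx', basicSol_apply_of_notMem hi'])
  have hcard : (Set.range e').ncard ≤ {i | x i ≠ 0}.ncard := by
    rw [← hrange, Set.ncard_range_of_injective hp.1.1.injective,
      Set.ncard_range_of_injective he.injective]
  exact hp.1.1.range_inj he |>.1 (hrange ▸ (Set.eq_of_subset_of_ncard_le hsub hcard).symm)

theorem eventually_primalFeasibleBasis_of_range_eq_support (hx : optSet A b c = {x})
    (he : StrictMono e) (hrange : Set.range e = {i | x i ≠ 0}) :
    ∀ᶠ b' in 𝓝 b, PrimalFeasibleBasis A b' e := by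
  have hcont : Continuous (basicSol A e) :=
    (basicSolLinearMap A e).continuous_of_finiteDimensional
  refine (Filter.eventually_all.2 fun i => ?_).mono fun b' hb' =>
    ⟨isBasis_of_range_eq_support hx he hrange, hb'⟩
  by_cases hi : i ∈ Set.range e
  · have hpos : 0 < basicSol A e b i := by
      rw [basicSol_eq_of_range_eq_support hx he hrange]
      exact ((hx ▸ rfl : x ∈ optSet A b c).1.2 i).lt_of_ne' (by rwa [hrange] at hi)
    exact ((continuous_apply i).comp hcont |>.tendsto b |>.eventually (lt_mem_nhds hpos)).mono
      fun _ h => h.le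
  · exact Eventually.of_forall fun b' => (basicSol_apply_of_notMem hi b').ge

end UniqueOptimum

theorem tendstoInMeasure_of_tendsto_measure_ne {Ω ι E : Type*} [MeasurableSpace Ω]
    {μ : Measure Ω} [PseudoEMetricSpace E] {l : Filter ι} {f : ι → Ω → E} {g : Ω → E}
    (h : Tendsto (fun i => μ {ω | f i ω ≠ g ω}) l (𝓝 0)) : TendstoInMeasure μ f l g :=
  fun ε hε => tendsto_of_tendsto_of_tendsto_of_le_of_le tendsto_const_nhds h (fun _ => zero_le)
    fun i => measure_mono fun ω hω hfg => by simp [hfg, hε.not_ge] at hω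

section Probability

variable {Ω : Type*} [MeasurableSpace Ω] {P : Measure Ω} [IsProbabilityMeasure P]

theorem tendstoInDistribution_iff_tendstoInDistribution {E : Type*} [TopologicalSpace E]
    [MeasurableSpace E] [OpensMeasurableSpace E] [TopologicalSpace.PseudoMetrizableSpace E]
    {X : ℕ → Ω → E} {Y : Ω → E} (hX : ∀ n, Measurable (X n)) (hY : Measurable Y) :
    _root_.TendstoInDistribution P X Y ↔
      MeasureTheory.TendstoInDistribution X atTop Y (fun _ => P) P := by
  have hint : ∀ (f : BoundedContinuousFunction E ℝ) {Z : Ω → E}, Measurable Z →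
      ∫ y, f y ∂(P.map Z) = ∫ ω, f (Z ω) ∂P :=
    fun f Z hZ => integral_map hZ.aemeasurable f.continuous.aestronglyMeasurable
  refine ⟨fun h => ⟨fun n => (hX n).aemeasurable, hY.aemeasurable, ?_⟩, fun h f => ?_⟩
  · refine ProbabilityMeasure.tendsto_iff_forall_integral_tendsto.2 fun f => ?_
    simpa only [ProbabilityMeasure.coe_mk, hint f (hX _), hint f hY] using h f
  · have := ProbabilityMeasure.tendsto_iff_forall_integral_tendsto.1 h.tendsto f
    simpa only [ProbabilityMeasure.coe_mk, hint f (hX _), hint f hY] using this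

theorem tendsto_measure_zero_of_subset_compl {ι : Type*} {l : Filter ι} {S T : ι → Set Ω}
    (hT : ∀ i, MeasurableSet (T i)) (hTS : ∀ i, T i ⊆ (S i)ᶜ)
    (hS : Tendsto (fun i => P (S i)) l (𝓝 1)) : Tendsto (fun i => P (T i)) l (𝓝 0) := by
  have hlim : Tendsto (fun i => 1 - P (S i)) l (𝓝 0) := by
    simpa using ENNReal.Tendsto.sub tendsto_const_nhds hS (Or.inl ENNReal.one_ne_top)
  refine tendsto_of_tendsto_of_tendsto_of_le_of_le tendsto_const_nhds hlim (fun _ => zero_le)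
    fun i => ?_
  rw [← compl_compl (T i), prob_compl_eq_one_sub (hT i).compl]
  exact tsub_le_tsub_left (measure_mono fun ω hω hωT => hTS i hωT hω) 1

theorem tendsto_measure_le_norm_of_tendstoInDistribution {E : Type*} [NormedAddCommGroup E]
    [CompleteSpace E] [SecondCountableTopology E] [MeasurableSpace E] [BorelSpace E]
    {X : ℕ → Ω → E} {Z : Ω → E}
    (h : MeasureTheory.TendstoInDistribution X atTop Z (fun _ => P) P) {r : ℕ → ℝ}
    (hr : Tendsto r atTop atTop) : Tendsto (fun n => P {ω | r n ≤ ‖X n ω‖}) atTop (𝓝 0) := by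
  set μ : ℕ → ProbabilityMeasure E := fun n => ⟨P.map (X n), _⟩
  have hcompact := h.tendsto.isCompact_insert_range
  have htight := isTightMeasureSet_of_isCompact_closure <| hcompact.of_isClosed_subset
    isClosed_closure (closure_minimal (Set.subset_insert _ _) hcompact.isClosed)
  have hsup := tendsto_measure_norm_gt_of_isTightMeasureSet htight
  rw [ENNReal.tendsto_nhds_zero] at hsup ⊢
  intro ε hε
  obtain ⟨R, hR⟩ := (hsup ε hε).exists
  filter_upwards [hr.eventually_gt_atTop R] with n hn
  calc P {ω | r n ≤ ‖X n ω‖} ≤ P (X n ⁻¹' {y | R < ‖y‖}) :=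
        measure_mono fun ω hω => hn.trans_le hω
    _ ≤ (μ n : Measure E) {y | R < ‖y‖} := Measure.le_map_apply (h.forall_aemeasurable n) _
    _ ≤ ε := (le_iSup₂ (f := fun (ν : Measure E) _ => ν {y | R < ‖y‖}) (μ n : Measure E)
        ⟨μ n, ⟨n, rfl⟩, rfl⟩).trans hR

variable {E F : Type*} [NormedAddCommGroup E] [NormedSpace ℝ E] [FiniteDimensional ℝ E]
  [MeasurableSpace E] [BorelSpace E]

theorem tendstoInMeasure_of_tendstoInDistribution_smul_sub {X : ℕ → Ω → E} {b : E}
    {Z : Ω → E} {r : ℕ → ℝ} (hr : Tendsto r atTop atTop)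
    (h : MeasureTheory.TendstoInDistribution (fun n ω => r n • (X n ω - b)) atTop Z
      (fun _ => P) P) :
    TendstoInMeasure P X atTop fun _ => b := by
  refine tendstoInMeasure_iff_dist.2 fun ε hε => ?_
  refine tendsto_of_tendsto_of_tendsto_of_le_of_le' tendsto_const_nhds
    (tendsto_measure_le_norm_of_tendstoInDistribution h (hr.atTop_mul_const hε))
    (Eventually.of_forall fun _ => zero_le) ?_
  filter_upwards [hr.eventually_gt_atTop 0] with n hn
  refine measure_mono fun ω hω => ?_
  simp only [norm_smul, Real.norm_of_nonneg hn.le, ← dist_eq_norm] at hω ⊢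
  exact mul_le_mul_of_nonneg_left hω hn.le

variable [NormedAddCommGroup F] [NormedSpace ℝ F] [FiniteDimensional ℝ F]
  [MeasurableSpace F] [BorelSpace F]

theorem tendstoInDistribution_smul_sub_of_eq_linear (L : E →ₗ[ℝ] F) {b : E} {x : F}
    {bn : ℕ → Ω → E} {xn : ℕ → Ω → F} {r : ℕ → ℝ} {Z : Ω → E} {S : ℕ → Set Ω} {U : Set E}
    (hbn : ∀ n, Measurable (bn n)) (hxn : ∀ n, Measurable (xn n)) (hr : Tendsto r atTop atTop)
    (hZ : MeasureTheory.TendstoInDistribution (fun n ω => r n • (bn n ω - b)) atTop Z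
      (fun _ => P) P)
    (hS : Tendsto (fun n => P (S n)) atTop (𝓝 1)) (hU : U ∈ 𝓝 b)
    (hxU : ∀ n, ∀ ω ∈ S n, bn n ω ∈ U → xn n ω = x + L (bn n ω - b)) :
    MeasureTheory.TendstoInDistribution (fun n ω => r n • (xn n ω - x)) atTop (L ∘ Z)
      (fun _ => P) P := by
  have hL : Continuous L := L.continuous_of_finiteDimensional
  obtain ⟨ε, hε, hball⟩ := Metric.mem_nhds_iff.1 hU
  set M : ℕ → Set Ω := fun n => {ω | xn n ω ≠ x + L (bn n ω - b)}
  have hfar := tendstoInMeasure_iff_dist.1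
    (tendstoInMeasure_of_tendstoInDistribution_smul_sub hr hZ) ε hε
  have hnear : Tendsto (fun n => P (M n ∩ {ω | dist (bn n ω) b < ε})) atTop (𝓝 0) := by
    refine tendsto_measure_zero_of_subset_compl (fun n => ?_)
      (fun n ω hω hS => hω.1 (hxU n ω hS (hball hω.2))) hS
    have hφ : Measurable fun ω => x + L (bn n ω - b) :=
      (continuous_const.add (hL.comp (continuous_id.sub continuous_const))).measurable.comp
        (hbn n)
    exact (measurableSet_eq_fun (hxn n) hφ).compl.inter
      (measurableSet_lt ((hbn n).dist measurable_const) measurable_const)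
  have hM : Tendsto (fun n => P (M n)) atTop (𝓝 0) := by
    refine tendsto_of_tendsto_of_tendsto_of_le_of_le tendsto_const_nhds
      (by simpa using hfar.add hnear) (fun _ => zero_le) fun n => ?_
    refine (measure_mono fun ω hω => ?_).trans (measure_union_le _ _)
    by_cases hd : dist (bn n ω) b < ε
    · exact Or.inr ⟨hω, hd⟩
    · exact Or.inl (not_lt.1 hd)
  refine tendstoInDistribution_of_tendstoInMeasure_sub _ _ (hZ.continuous_comp hL)
    (tendstoInMeasure_of_tendsto_measure_ne ?_)
    fun n => (((hxn n).sub_const x).const_smul (r n)).aemeasurable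
  refine tendsto_of_tendsto_of_tendsto_of_le_of_le tendsto_const_nhds hM (fun _ => zero_le)
    fun n => measure_mono fun ω hω hxω => hω ?_
  simp [hxω, map_smul]

end Probability

theorem stmt5_general {Ω : Type*} [MeasurableSpace Ω] (P : Measure Ω) [IsProbabilityMeasure P]
    (A : Matrix (Fin m) (Fin d) ℝ)
    (b : Fin m → ℝ) (c : Fin d → ℝ)
    (xstar : Fin d → ℝ) (hunique : optSet A b c = {xstar})
    (hnondeg : {i | xstar i ≠ 0}.ncard = m)
    (bn : ℕ → Ω → Fin m → ℝ) (hbn : ∀ n, Measurable (bn n))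
    (rn : ℕ → ℝ) (hrn : Tendsto rn atTop atTop)
    (G : Ω → Fin m → ℝ) (hG : Measurable G)
    (hclt : TendstoInDistribution P (fun n ω => rn n • (bn n ω - b)) G)
    (hfeas : Tendsto (fun n => P {ω | (optSet A (bn n ω) c).Nonempty}) atTop (𝓝 1))
    (xn : ℕ → Ω → Fin d → ℝ) (hxn : ∀ n, Measurable (xn n))
    (hxnopt : ∀ n ω, (optSet A (bn n ω) c).Nonempty → xn n ω ∈ optSet A (bn n ω) c) :
    (∃! e : Fin m → Fin d,
        PrimalFeasibleBasis A b e ∧ DualFeasibleBasis A c e) ∧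
    ∀ e : Fin m → Fin d, PrimalFeasibleBasis A b e → DualFeasibleBasis A c e →
      Function.Injective (fun v : Fin m → ℝ => basicSol A e v) ∧
      TendstoInDistribution P (fun n ω => rn n • (xn n ω - xstar))
        (fun ω => basicSol A e (G ω)) := by
  obtain ⟨e, he, hrange⟩ := exists_strictMono_range_eq_of_ncard_eq hnondeg
  have huniq : ∀ e', PrimalFeasibleBasis A b e' → DualFeasibleBasis A c e' → e' = e :=
    fun _ => eq_of_primalFeasibleBasis_of_dualFeasibleBasis hunique he hrange
  refine ⟨⟨e, ⟨primalFeasibleBasis_of_range_eq_support hunique he hrange,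
    dualFeasibleBasis_of_range_eq_support hunique he hrange⟩, fun e' h => huniq e' h.1 h.2⟩,
    fun e' hp hd => ?_⟩
  obtain rfl : e = e' := (huniq e' hp hd).symm
  set L := basicSolLinearMap A e
  have hL : Continuous L := L.continuous_of_finiteDimensional
  refine ⟨basicSol_injective hp.1, (tendstoInDistribution_iff_tendstoInDistribution
    (fun n => ((hxn n).sub_const xstar).const_smul (rn n)) (hL.measurable.comp hG)).2 ?_⟩
  refine tendstoInDistribution_smul_sub_of_eq_linear L hbn hxn hrn
    ((tendstoInDistribution_iff_tendstoInDistribution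
      (fun n => ((hbn n).sub_const b).const_smul (rn n)) hG).1 hclt) hfeas
    (eventually_primalFeasibleBasis_of_range_eq_support hunique he hrange)
    fun n ω hω hpf => ?_
  rw [eq_basicSol_of_mem_optSet hpf
    (fun i => transpose_mulVec_dualSol_lt_of_range_eq_support hunique he hrange)
    (hxnopt n ω hω), L.map_sub]
  simp [L, basicSol_eq_of_range_eq_support hunique he hrange]

/-- Theorem 3.1 (nondegenerate case): assume (A2) `(P_b)` has a unique optimal
solution `x*(b)`; (B1) `G_n = r_n (b_n - b)` converges in distribution to a
random vector `G` with law absolutely continuous w.r.t. Lebesgue measure on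
`ℝ^m`, `r_n → ∞`; (B2) `ℙ(OPT(b_n) ≠ ∅) → 1`; and `x*(b)` is nondegenerate
(exactly `m` nonzero coordinates). Then there is a unique basis `I₁` that is
both primal and dual feasible, and for any measurable choice `x*(b_n)` of an
optimal solution, `r_n (x*(b_n) - x*(b))` converges in distribution to
`x(I₁, G)`, an invertible (injective) linear function of `G`. -/
theorem stmt5 {Ω : Type*} [MeasurableSpace Ω] (P : Measure Ω) [IsProbabilityMeasure P]
    (hm : 1 ≤ m) (hmd : m ≤ d)
    (A : Matrix (Fin m) (Fin d) ℝ) (hA : A.rank = m)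
    (b : Fin m → ℝ) (c : Fin d → ℝ)
    (xstar : Fin d → ℝ) (hunique : optSet A b c = {xstar})
    (hnondeg : {i | xstar i ≠ 0}.ncard = m)
    (bn : ℕ → Ω → Fin m → ℝ) (hbn : ∀ n, Measurable (bn n))
    (rn : ℕ → ℝ) (hrnpos : ∀ n, 0 < rn n) (hrn : Tendsto rn atTop atTop)
    (G : Ω → Fin m → ℝ) (hG : Measurable G)
    (hclt : TendstoInDistribution P (fun n ω => rn n • (bn n ω - b)) G)
    (habs : Measure.map G P ≪ (volume : Measure (Fin m → ℝ)))
    (hfeas : Tendsto (fun n => P {ω | (optSet A (bn n ω) c).Nonempty}) atTop (𝓝 1))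
    (xn : ℕ → Ω → Fin d → ℝ) (hxn : ∀ n, Measurable (xn n))
    (hxnopt : ∀ n ω, (optSet A (bn n ω) c).Nonempty → xn n ω ∈ optSet A (bn n ω) c) :
    (∃! e : Fin m → Fin d,
        PrimalFeasibleBasis A b e ∧ DualFeasibleBasis A c e) ∧
    ∀ e : Fin m → Fin d, PrimalFeasibleBasis A b e → DualFeasibleBasis A c e →
      Function.Injective (fun v : Fin m → ℝ => basicSol A e v) ∧
      TendstoInDistribution P (fun n ω => rn n • (xn n ω - xstar))
        (fun ω => basicSol A e (G ω)) :=
  stmt5_general P A b c xstar hunique hnondeg bn hbn rn hrn G hG hclt hfeas xn hxn hxnopt
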